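/- Let μ > 0 and let θ̂* ∈ ℝ^d be a unit vector with y_i a_iᵀθ̂* ≥ μ for all i ∈ [n]. Then for every θ ∈ ℝ^d, −β(θ) · θ̂*ᵀ ∇f(θ) ≥ μ, where β(θ) := ((1/n) Σ_{i=1}^n (1 + exp(y_i a_iᵀθ))^{−1})^{−1} and ∇f(θ) = −(1/n) Σ_{i=1}^n (1 + exp(y_i a_iᵀθ))^{−1} y_i a_i. -/
import Mathlib


open scoped RealInnerProductSpace BigOperators

/-- The gradient of the logistic loss `f(θ) = (1/n) Σ_i log(1 + exp(-y_i aᵢᵀθ))`. -/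
noncomputable def logisticGrad {d n : ℕ} (a : Fin n → EuclideanSpace ℝ (Fin d))
    (y : Fin n → ℝ) (θ : EuclideanSpace ℝ (Fin d)) : EuclideanSpace ℝ (Fin d) :=
  -(((1 : ℝ) / n) • ∑ i, ((1 + Real.exp (y i * ⟪a i, θ⟫))⁻¹ * y i) • a i)

/-- The normalization factor `β(θ) = ((1/n) Σ_i (1 + exp(y_i aᵢᵀθ))⁻¹)⁻¹`. -/
noncomputable def logisticBeta {d n : ℕ} (a : Fin n → EuclideanSpace ℝ (Fin d))
    (y : Fin n → ℝ) (θ : EuclideanSpace ℝ (Fin d)) : ℝ :=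
  (((1 : ℝ) / n) * ∑ i, (1 + Real.exp (y i * ⟪a i, θ⟫))⁻¹)⁻¹

/-- **Margin correlation of the normalized logistic gradient.** If `θ̂*` is a unit vector
with margin `μ` (i.e. `y_i aᵢᵀθ̂* ≥ μ` for all `i`), then for every `θ`,
`−β(θ) ⟨θ̂*, ∇f(θ)⟩ ≥ μ`. -/
theorem beta_inner_logisticGrad_margin {d n : ℕ} (hn : 0 < n)
    (a : Fin n → EuclideanSpace ℝ (Fin d)) (y : Fin n → ℝ)
    (hy : ∀ i, y i = 1 ∨ y i = -1)
    (μ : ℝ) (hμ : 0 < μ)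
    (θstar : EuclideanSpace ℝ (Fin d)) (hstar : ‖θstar‖ = 1)
    (hmargin : ∀ i, μ ≤ y i * ⟪a i, θstar⟫)
    (θ : EuclideanSpace ℝ (Fin d)) :
    μ ≤ -(logisticBeta a y θ * ⟪θstar, logisticGrad a y θ⟫) := by
  set w : Fin n → ℝ := fun i => (1 + Real.exp (y i * ⟪a i, θ⟫))⁻¹ with hw
  have hwpos : ∀ i, 0 < w i := fun i => by
    have := Real.exp_pos (y i * ⟪a i, θ⟫); positivity
  have hinner : ⟪θstar, logisticGrad a y θ⟫
      = -(((1 : ℝ) / n) * ∑ i, w i * (y i * ⟪a i, θstar⟫)) := by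
    rw [logisticGrad, inner_neg_right, inner_smul_right, inner_sum]
    congr 2
    refine Finset.sum_congr rfl fun i _ => ?_
    rw [inner_smul_right, real_inner_comm θstar (a i)]
    ring
  have hS : 0 < ((1 : ℝ) / n) * ∑ i, w i := by
    have hnn : (0 : ℝ) < n := by exact_mod_cast hn
    have : 0 < ∑ i, w i :=
      Finset.sum_pos (fun i _ => hwpos i) (Finset.univ_nonempty_iff.mpr ⟨⟨0, hn⟩⟩)
    positivity
  have hsum : μ * (((1 : ℝ) / n) * ∑ i, w i)
      ≤ ((1 : ℝ) / n) * ∑ i, w i * (y i * ⟪a i, θstar⟫) := by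
    have hnn : (0 : ℝ) ≤ 1 / n := by positivity
    rw [← mul_assoc, mul_comm μ, mul_assoc, Finset.mul_sum]
    refine mul_le_mul_of_nonneg_left ?_ hnn
    refine Finset.sum_le_sum fun i _ => ?_
    nlinarith [hmargin i, hwpos i]
  rw [hinner, logisticBeta]
  have : -((((1 : ℝ) / n) * ∑ i, w i)⁻¹ *
      -(((1 : ℝ) / n) * ∑ i, w i * (y i * ⟪a i, θstar⟫)))
      = (((1 : ℝ) / n) * ∑ i, w i)⁻¹ *
        (((1 : ℝ) / n) * ∑ i, w i * (y i * ⟪a i, θstar⟫)) := by ring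
  rw [this, ge_iff_le.symm, ge_iff_le, le_inv_mul_iff₀ hS, mul_comm]
  exact hsum
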